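/- arXiv:2306.07818 — 5 statements merged into one kernel-verified Lean document; each statement's English description precedes it below -/
import Mathlib

section
/- Suppose (π̄, λ̄) is a ξ-near saddle point of the Lagrangian L(π, λ) = J_R(π) + λ · (τ - J_C(π)) with respect to Π̃ × BΔ^I, where Π̃ contains a feasible policy π_c and 0 ≤ J_R(π) ≤ 1/(1-γ) for all π ∈ Π̃. Then for every i = 1,...,I, J_{C_i}(π̄) ≤ τ_i + ξ/B + 1/(B(1-γ)). -/
/-- near saddle point of the Lagrangian gives near feasibility. -/
theorem stmt2 {Pol : Type*} (I : ℕ) (hI : 0 < I) (γ : ℝ) (hγ0 : 0 < γ) (hγ1 : γ < 1)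
    (JR : Pol → ℝ) (JC : Fin I → Pol → ℝ) (τ : Fin I → ℝ)
    (B ξ : ℝ) (hB : 0 < B) (hξ : 0 ≤ ξ)
    (hJR : ∀ p, 0 ≤ JR p ∧ JR p ≤ 1 / (1 - γ))
    (L : Pol → (Fin I → ℝ) → ℝ)
    (hL : ∀ p lam, L p lam = JR p + ∑ i, lam i * (τ i - JC i p))
    (Pt : Set Pol) (πb : Pol) (hπb : πb ∈ Pt)
    (lamb : Fin I → ℝ) (hlamb0 : ∀ i, 0 ≤ lamb i) (hlambB : ∑ i, lamb i ≤ B)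
    (πc : Pol) (hπc : πc ∈ Pt) (hfeas : ∀ i, JC i πc ≤ τ i)
    (hsad : ∀ p ∈ Pt, ∀ lam : Fin I → ℝ, (∀ i, 0 ≤ lam i) → ∑ i, lam i ≤ B →
      L p lamb ≤ L πb lam + ξ) :
    ∀ i, JC i πb ≤ τ i + ξ / B + 1 / (B * (1 - γ)) := by
  intro i
  set lam : Fin I → ℝ := fun j => if j = i then B else 0 with hlamdef
  have hlam0 : ∀ j, 0 ≤ lam j := by
    intro j; by_cases h : j = i <;> simp [hlamdef, h, hB.le]
  have hlamsum : ∑ j, lam j = B := by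
    simp [hlamdef]
  have hkey := hsad πc hπc lam hlam0 hlamsum.le
  rw [hL, hL] at hkey
  have hLlam : ∑ j, lam j * (τ j - JC j πb) = B * (τ i - JC i πb) := by
    rw [Finset.sum_eq_single i]
    · simp [hlamdef]
    · intro j _ hj; simp [hlamdef, hj]
    · simp
  rw [hLlam] at hkey
  have hpos : 0 ≤ JR πc + ∑ j, lamb j * (τ j - JC j πc) := by
    have h1 := (hJR πc).1
    have h2 : 0 ≤ ∑ j, lamb j * (τ j - JC j πc) :=
      Finset.sum_nonneg fun j _ => mul_nonneg (hlamb0 j) (by linarith [hfeas j])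
    linarith
  have hJRb := (hJR πb).2
  have h1γ : 0 < 1 - γ := by linarith
  -- B * (JC i πb - τ i) ≤ JR πb + ξ ≤ 1/(1-γ) + ξ
  have h : B * (JC i πb - τ i) ≤ 1 / (1 - γ) + ξ := by nlinarith
  have hfin : JC i πb - τ i ≤ (1 / (1 - γ) + ξ) / B := by
    rw [le_div_iff₀ hB]
    nlinarith
  have : (1 / (1 - γ) + ξ) / B = ξ / B + 1 / (B * (1 - γ)) := by
    field_simp; ring
  linarith [hfin, this.le]
end

section
/- Let (π*_η, λ*_η) be a saddle point (primal-dual solution) of the Lagrangian L_η(π, λ) = J_R(π) + λ·(τ - η·1 - J_C(π)) over Conv(Π) × ℝ_+^I satisfying complementary slackness λ*_η · (τ - η·1 - J_C(π*_η)) = 0, and suppose (π̄, λ̄) is a ξ-near saddle point of L_η with respect to Π̃ × BΔ^I with π*_η ∈ Π̃ and B > ‖λ*_η‖₁. Then J_R(π̄) ≥ J_R(π*_η) - ξ and J_{C_i}(π̄) ≤ τ_i - η + ξ/(B - ‖λ*_η‖₁) for all i. -/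
/-- near saddle point of the tightened Lagrangian vs an exact primal-dual solution. -/
theorem stmt3 {Pol : Type*} (I : ℕ) (η ξ B : ℝ) (hη : 0 ≤ η) (hξ : 0 ≤ ξ)
    (JR : Pol → ℝ) (JC : Fin I → Pol → ℝ) (τ : Fin I → ℝ)
    (L : Pol → (Fin I → ℝ) → ℝ)
    (hL : ∀ p lam, L p lam = JR p + ∑ i, lam i * (τ i - η - JC i p))
    (πstar : Pol) (lamstar : Fin I → ℝ)
    (hlamstar : ∀ i, 0 ≤ lamstar i)
    (hfeas : ∀ i, JC i πstar ≤ τ i - η)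
    (hsaddle : ∀ p : Pol, L p lamstar ≤ L πstar lamstar)
    (hslack : ∑ i, lamstar i * (τ i - η - JC i πstar) = 0)
    (Pt : Set Pol) (hπstar : πstar ∈ Pt)
    (hB : ∑ i, lamstar i < B)
    (πb : Pol) (hπb : πb ∈ Pt)
    (lamb : Fin I → ℝ) (hlamb0 : ∀ i, 0 ≤ lamb i) (hlambB : ∑ i, lamb i ≤ B)
    (hnearsad : ∀ p ∈ Pt, ∀ lam : Fin I → ℝ, (∀ i, 0 ≤ lam i) → ∑ i, lam i ≤ B →
      L p lamb ≤ L πb lam + ξ) :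
    JR πb ≥ JR πstar - ξ ∧
      ∀ i, JC i πb ≤ τ i - η + ξ / (B - ∑ i, lamstar i) := by
  set s := ∑ i, lamstar i with hs
  have hBs : 0 < B - s := by linarith
  -- L πstar lamb ≥ JR πstar
  have hLlb : JR πstar ≤ L πstar lamb := by
    rw [hL]
    have : 0 ≤ ∑ i, lamb i * (τ i - η - JC i πstar) :=
      Finset.sum_nonneg fun i _ => mul_nonneg (hlamb0 i) (by linarith [hfeas i])
    linarith
  -- L πstar lamstar = JR πstar
  have hLstar : L πstar lamstar = JR πstar := by
    rw [hL, hslack]; ring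
  constructor
  · -- use lam = 0
    have hs0 : 0 ≤ s := Finset.sum_nonneg fun i _ => hlamstar i
    have h := hnearsad πstar hπstar (fun _ => 0) (fun i => le_refl 0)
      (by simp; linarith)
    have h0 : L πb (fun _ => 0) = JR πb := by rw [hL]; simp
    rw [h0] at h
    linarith
  · intro i
    -- lam = lamstar + (B - s) • e_i
    set lam : Fin I → ℝ := fun j => lamstar j + if j = i then B - s else 0 with hlam
    have hlamnn : ∀ j, 0 ≤ lam j := by
      intro j
      simp only [hlam]
      have := hlamstar j
      split <;> linarith
    have hlamsum : ∑ j, lam j = B := by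
      simp only [hlam]
      rw [Finset.sum_add_distrib, Finset.sum_ite_eq' Finset.univ i (fun _ => B - s)]
      simp [← hs]
    have h := hnearsad πstar hπstar lam hlamnn (le_of_eq hlamsum)
    have hexp : L πb lam
        = JR πb + ∑ j, lamstar j * (τ j - η - JC j πb)
          + (B - s) * (τ i - η - JC i πb) := by
      rw [hL]
      simp only [hlam, add_mul, Finset.sum_add_distrib, ite_mul, zero_mul]
      rw [Finset.sum_ite_eq' Finset.univ i (fun j => (B - s) * (τ j - η - JC j πb))]
      simp [add_assoc]
    have hsad := hsaddle πb
    rw [hLstar, hL] at hsad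
    -- JR πb + ∑ lamstar g ≤ JR πstar
    have hchain : JR πstar ≤ L πb lam + ξ := le_trans hLlb h
    rw [hexp] at hchain
    have hkey : -ξ ≤ (B - s) * (τ i - η - JC i πb) := by linarith
    have : -(ξ / (B - s)) ≤ τ i - η - JC i πb := by
      rw [← neg_div, div_le_iff₀ hBs]
      linarith [mul_comm (B - s) (τ i - η - JC i πb)]
    linarith
end

section
/- Let (π*, λ*) be optimal primal-dual solutions of the constrained problem P(τ) with strong duality, and let (π̃*, λ̃*) be optimal primal-dual solutions of the perturbed problem P(τ - η·1) (with η ≥ 0) with strong duality. Then J_R(π̃*) ≥ J_R(π*) - η‖λ̃*‖₁. -/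
/-- perturbation analysis of the constrained problem. -/
theorem stmt5 {Pol : Type*} [Nonempty Pol] (I : ℕ) (η : ℝ) (hη : 0 ≤ η)
    (JR : Pol → ℝ) (JC : Fin I → Pol → ℝ) (τ : Fin I → ℝ)
    (πstar : Pol) (hfeas : ∀ i, JC i πstar ≤ τ i)
    (lamt : Fin I → ℝ) (hlamt : ∀ i, 0 ≤ lamt i) (πt : Pol)
    (hdual : IsLUB (Set.range fun p => JR p + ∑ i, lamt i * (τ i - η - JC i p)) (JR πt)) :
    JR πt ≥ JR πstar - η * ∑ i, lamt i := by
  have h1 : JR πstar + ∑ i, lamt i * (τ i - η - JC i πstar) ≤ JR πt :=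
    hdual.1 ⟨πstar, rfl⟩
  have h2 : ∑ i, lamt i * (-η) ≤ ∑ i, lamt i * (τ i - η - JC i πstar) := by
    apply Finset.sum_le_sum
    intro i _
    have := hfeas i
    nlinarith [hlamt i]
  have h3 : ∑ i, lamt i * (-η) = -(η * ∑ i, lamt i) := by
    rw [Finset.mul_sum]
    simp [mul_comm]
  linarith
end

section
/- Performance difference lemma: for a discounted MDP with discount γ ∈ (0,1), any policy π, any utility function U : S × A → ℝ, and any function f : S × A → ℝ, the occupancy measure identity gives (1-γ)(f(s₀, π̂) - J_U(π)) = A_π(π̂, f) + E_{(s,a)∼d^π}[(f - T_U^{π̂} f)(s,a)], where A_π(π̂, f) = E_{(s,a)∼d^π}[f(s, π̂) - f(s,a)], f(s, π̂) = Σ_a π̂(a|s) f(s,a), and T_U^{π̂} f(s,a) = U(s,a) + γ E_{s'∼P(·|s,a)}[f(s', π̂)]. -/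
open Finset

/-- Distribution over state-action pairs at time `t` when running policy `pol`
from initial state `s0` in the MDP with transition kernel `P`. -/
noncomputable def stepDist {S A : Type*} [Fintype S] [Fintype A] [DecidableEq S]
    (P : S → A → S → ℝ) (pol : S → A → ℝ) (s0 : S) : ℕ → S → A → ℝ
  | 0 => fun s a => (if s = s0 then (1 : ℝ) else 0) * pol s a
  | (t + 1) => fun s a => (∑ s', ∑ a', stepDist P pol s0 t s' a' * P s' a' s) * pol s a

/-- Discounted occupancy measure d^π(s,a) = (1-γ) Σ_t γ^t P^π(s_t=s, a_t=a). -/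
noncomputable def occ {S A : Type*} [Fintype S] [Fintype A] [DecidableEq S]
    (γ : ℝ) (P : S → A → S → ℝ) (pol : S → A → ℝ) (s0 : S) (s : S) (a : A) : ℝ :=
  (1 - γ) * ∑' t : ℕ, γ ^ t * stepDist P pol s0 t s a

/-- Expectation of `h` under the discounted occupancy measure d^π. -/
noncomputable def Eocc {S A : Type*} [Fintype S] [Fintype A] [DecidableEq S]
    (γ : ℝ) (P : S → A → S → ℝ) (pol : S → A → ℝ) (s0 : S) (h : S → A → ℝ) : ℝ :=
  ∑ s, ∑ a, occ γ P pol s0 s a * h s a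

/-- f(s, π) = Σ_a π(a|s) f(s,a). -/
def fPol {S A : Type*} [Fintype A] (f : S → A → ℝ) (pol : S → A → ℝ) (s : S) : ℝ :=
  ∑ a, pol s a * f s a

/-- Bellman operator (T_U^π f)(s,a) = U(s,a) + γ E_{s'~P(·|s,a)}[f(s',π)]. -/
noncomputable def bellman {S A : Type*} [Fintype S] [Fintype A]
    (γ : ℝ) (P : S → A → S → ℝ) (U : S → A → ℝ) (pol : S → A → ℝ) (f : S → A → ℝ)
    (s : S) (a : A) : ℝ :=
  U s a + γ * ∑ s', P s a s' * fPol f pol s'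

/-- J_U(π) = (1/(1-γ)) E_{d^π}[U]. -/
noncomputable def Jval {S A : Type*} [Fintype S] [Fintype A] [DecidableEq S]
    (γ : ℝ) (P : S → A → S → ℝ) (pol : S → A → ℝ) (s0 : S) (U : S → A → ℝ) : ℝ :=
  (1 / (1 - γ)) * Eocc γ P pol s0 U

/-- `P` is a transition kernel (each row a probability distribution). -/
def IsKernel {S A : Type*} [Fintype S] (P : S → A → S → ℝ) : Prop :=
  ∀ s a, (∀ s', 0 ≤ P s a s') ∧ ∑ s', P s a s' = 1

/-- `pol` is a (Markov stationary) policy. -/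
def IsPolicy {S A : Type*} [Fintype A] (pol : S → A → ℝ) : Prop :=
  ∀ s, (∀ a, 0 ≤ pol s a) ∧ ∑ a, pol s a = 1

/-! Write `stepMean t h` for the mean of `h (s_t, a_t)` along the chain run by `pol`. Then
`Eocc h = (1 - γ) ∑ₜ γ^t stepMean t h`, and since the rows of `pol` sum to one, the mean at time
`t + 1` of a state function `g` is the mean at time `t` of its one-step expectation
`(s, a) ↦ ∑ s', P s a s' * g s'`. Hence `Eocc g - γ Eocc (P g)` telescopes to `(1 - γ) g s0`;
with `g = fPol f polhat` and linearity of `Eocc` this is the performance difference identity. -/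

theorem tsum_pow_mul_sub_mul_tsum_pow_mul_succ {γ : ℝ} {u : ℕ → ℝ}
    (hu : Summable fun t => γ ^ t * u t) :
    ∑' t, γ ^ t * u t - γ * ∑' t, γ ^ t * u (t + 1) = u 0 := by
  rw [hu.tsum_eq_zero_add, ← tsum_mul_left]
  simp [pow_succ, mul_assoc, mul_left_comm]

section

variable {S A : Type*} [Fintype S] [Fintype A] [DecidableEq S]
variable {γ : ℝ} {P : S → A → S → ℝ} {pol : S → A → ℝ} {s0 : S}

noncomputable def stepMean (P : S → A → S → ℝ) (pol : S → A → ℝ) (s0 : S) (t : ℕ)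
    (h : S → A → ℝ) : ℝ :=
  ∑ s, ∑ a, stepDist P pol s0 t s a * h s a

theorem stepMean_zero (hpol : IsPolicy pol) (g : S → ℝ) :
    stepMean P pol s0 0 (fun s _ => g s) = g s0 := by
  simp [stepMean, stepDist, ite_mul, ← sum_mul, (hpol s0).2]

theorem stepMean_succ (hpol : IsPolicy pol) (t : ℕ) (g : S → ℝ) :
    stepMean P pol s0 (t + 1) (fun s _ => g s)
      = stepMean P pol s0 t (fun s a => ∑ s', P s a s' * g s') := by
  have hrow (s : S) (x : ℝ) : ∑ a, x * pol s a * g s = x * g s := by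
    rw [← sum_mul, ← mul_sum, (hpol s).2, mul_one]
  simp only [stepMean, stepDist, hrow]
  simp only [sum_mul, mul_sum]
  rw [sum_comm]
  refine sum_congr rfl fun s' _ => ?_
  rw [sum_comm]
  simp only [mul_assoc]

theorem stepDist_nonneg (hP : IsKernel P) (hpol : IsPolicy pol) (t : ℕ) (s : S) (a : A) :
    0 ≤ stepDist P pol s0 t s a := by
  induction t generalizing s a with
  | zero => exact mul_nonneg (by positivity) ((hpol s).1 a)
  | succ t ih =>
    exact mul_nonneg (sum_nonneg fun s' _ => sum_nonneg fun a' _ =>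
      mul_nonneg (ih s' a') ((hP s' a').1 s)) ((hpol s).1 a)

theorem stepMean_one (hP : IsKernel P) (hpol : IsPolicy pol) (t : ℕ) :
    stepMean P pol s0 t (fun _ _ => 1) = 1 := by
  induction t with
  | zero => exact stepMean_zero hpol _
  | succ t ih =>
    rw [stepMean_succ hpol]
    simpa only [mul_one, (hP _ _).2] using ih

theorem stepDist_le_one (hP : IsKernel P) (hpol : IsPolicy pol) (t : ℕ) (s : S) (a : A) :
    stepDist P pol s0 t s a ≤ 1 := by
  have hnn := stepDist_nonneg (s0 := s0) hP hpol t
  calc stepDist P pol s0 t s a ≤ ∑ a', stepDist P pol s0 t s a' :=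
        single_le_sum (fun a' _ => hnn s a') (mem_univ a)
    _ ≤ ∑ s', ∑ a', stepDist P pol s0 t s' a' :=
        single_le_sum (f := fun s' => ∑ a', stepDist P pol s0 t s' a')
          (fun s' _ => sum_nonneg fun a' _ => hnn s' a') (mem_univ s)
    _ = 1 := by simpa [stepMean] using stepMean_one (s0 := s0) hP hpol t

theorem summable_pow_mul_stepDist (hγ0 : 0 ≤ γ) (hγ1 : γ < 1) (hP : IsKernel P)
    (hpol : IsPolicy pol) (s : S) (a : A) :
    Summable fun t => γ ^ t * stepDist P pol s0 t s a :=
  (summable_geometric_of_lt_one hγ0 hγ1).of_nonneg_of_le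
    (fun t => mul_nonneg (pow_nonneg hγ0 t) (stepDist_nonneg hP hpol t s a))
    (fun t => mul_le_of_le_one_right (pow_nonneg hγ0 t) (stepDist_le_one hP hpol t s a))

theorem hasSum_pow_mul_stepMean (hγ0 : 0 ≤ γ) (hγ1 : γ < 1) (hP : IsKernel P)
    (hpol : IsPolicy pol) (h : S → A → ℝ) :
    HasSum (fun t => γ ^ t * stepMean P pol s0 t h)
      (∑ s, ∑ a, (∑' t, γ ^ t * stepDist P pol s0 t s a) * h s a) := by
  have hsa (s : S) (a : A) :=
    (summable_pow_mul_stepDist (s0 := s0) hγ0 hγ1 hP hpol s a).hasSum.mul_right (h s a)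
  refine (hasSum_sum fun s _ => hasSum_sum fun a _ => hsa s a).congr_fun fun t => ?_
  simp only [stepMean, mul_sum, mul_assoc]

theorem Eocc_eq_tsum (hγ0 : 0 ≤ γ) (hγ1 : γ < 1) (hP : IsKernel P) (hpol : IsPolicy pol)
    (h : S → A → ℝ) :
    Eocc γ P pol s0 h = (1 - γ) * ∑' t, γ ^ t * stepMean P pol s0 t h := by
  rw [(hasSum_pow_mul_stepMean hγ0 hγ1 hP hpol h).tsum_eq]
  simp only [Eocc, occ, mul_sum, mul_assoc]

theorem Eocc_sub_mul_Eocc_kernel (hγ0 : 0 ≤ γ) (hγ1 : γ < 1) (hP : IsKernel P)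
    (hpol : IsPolicy pol) (g : S → ℝ) :
    Eocc γ P pol s0 (fun s _ => g s) - γ * Eocc γ P pol s0 (fun s a => ∑ s', P s a s' * g s')
      = (1 - γ) * g s0 := by
  simp only [Eocc_eq_tsum hγ0 hγ1 hP hpol, ← stepMean_succ hpol]
  rw [mul_left_comm, ← mul_sub, tsum_pow_mul_sub_mul_tsum_pow_mul_succ
    (hasSum_pow_mul_stepMean hγ0 hγ1 hP hpol _).summable, stepMean_zero hpol]

theorem Eocc_add (h₁ h₂ : S → A → ℝ) :
    Eocc γ P pol s0 (fun s a => h₁ s a + h₂ s a) = Eocc γ P pol s0 h₁ + Eocc γ P pol s0 h₂ := by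
  simp only [Eocc, mul_add, sum_add_distrib]

theorem Eocc_sub (h₁ h₂ : S → A → ℝ) :
    Eocc γ P pol s0 (fun s a => h₁ s a - h₂ s a) = Eocc γ P pol s0 h₁ - Eocc γ P pol s0 h₂ := by
  simp only [Eocc, mul_sub, sum_sub_distrib]

theorem Eocc_const_mul (c : ℝ) (h : S → A → ℝ) :
    Eocc γ P pol s0 (fun s a => c * h s a) = c * Eocc γ P pol s0 h := by
  simp only [Eocc, mul_sum, mul_left_comm]

end

theorem stmt6_general {S A : Type*} [Fintype S] [Fintype A] [DecidableEq S]
    (γ : ℝ) (hγ0 : 0 < γ) (hγ1 : γ < 1)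
    (P : S → A → S → ℝ) (hP : IsKernel P)
    (pol polhat : S → A → ℝ) (hpol : IsPolicy pol)
    (s0 : S) (U f : S → A → ℝ) :
    (1 - γ) * (fPol f polhat s0 - Jval γ P pol s0 U)
      = Eocc γ P pol s0 (fun s a => fPol f polhat s - f s a)
        + Eocc γ P pol s0 (fun s a => f s a - bellman γ P U polhat f s a) := by
  set g := fPol f polhat
  have hJ : (1 - γ) * Jval γ P pol s0 U = Eocc γ P pol s0 U := by
    rw [Jval, ← mul_assoc, mul_one_div_cancel (sub_ne_zero.2 hγ1.ne'), one_mul]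
  calc (1 - γ) * (g s0 - Jval γ P pol s0 U)
      = Eocc γ P pol s0 (fun s _ => g s) - γ * Eocc γ P pol s0 (fun s a => ∑ s', P s a s' * g s')
          - Eocc γ P pol s0 U := by
        rw [mul_sub, hJ, Eocc_sub_mul_Eocc_kernel hγ0.le hγ1 hP hpol]
    _ = Eocc γ P pol s0 (fun s a => (g s - f s a) + (f s a - bellman γ P U polhat f s a)) := by
        rw [← Eocc_const_mul, ← Eocc_sub, ← Eocc_sub]
        congr 1
        funext s a
        rw [bellman]
        ring
    _ = _ := Eocc_add _ _

/-- generalized performance difference lemma (Lemma A.2). -/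
theorem stmt6 {S A : Type*} [Fintype S] [Fintype A] [DecidableEq S]
    (γ : ℝ) (hγ0 : 0 < γ) (hγ1 : γ < 1)
    (P : S → A → S → ℝ) (hP : IsKernel P)
    (pol polhat : S → A → ℝ) (hpol : IsPolicy pol) (hpolhat : IsPolicy polhat)
    (s0 : S) (U f : S → A → ℝ) :
    (1 - γ) * (fPol f polhat s0 - Jval γ P pol s0 U)
      = Eocc γ P pol s0 (fun s a => fPol f polhat s - f s a)
        + Eocc γ P pol s0 (fun s a => f s a - bellman γ P U polhat f s a) :=
  stmt6_general γ hγ0 hγ1 P hP pol polhat hpol s0 U f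
end

section
/- Suppose P(τ) satisfies Slater's condition with margin φ/(1-γ) (some π̂ has J_{C_i}(π̂) ≤ τ_i - φ/(1-γ) for all i), and let 0 ≤ ζα < φ/(1-γ). Then the tightened problem P(τ - ζα·1) also satisfies Slater's condition with margin φ/(1-γ) - ζα, and consequently any optimal dual variable λ̃* (with strong duality) of P(τ - ζα·1) satisfies ‖λ̃*‖₁ ≤ 1/(φ - (1-γ)ζα), provided 0 ≤ J_R ≤ 1/(1-γ). -/
/-- Slater's condition persists for the tightened problem with margin
φ/(1-γ) - ζα, and the optimal dual variable of the tightened problem is bounded. -/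
theorem stmt16 {Pol : Type*} [Nonempty Pol] (I : ℕ) (γ φ za : ℝ)
    (hγ0 : 0 < γ) (hγ1 : γ < 1) (hφ : 0 < φ) (hza0 : 0 ≤ za) (hza : za < φ / (1 - γ))
    (JR : Pol → ℝ) (JC : Fin I → Pol → ℝ) (τ : Fin I → ℝ)
    (hJR : ∀ p, 0 ≤ JR p ∧ JR p ≤ 1 / (1 - γ))
    (πhat : Pol) (hslater : ∀ i, JC i πhat ≤ τ i - φ / (1 - γ))
    (lamt : Fin I → ℝ) (hlamt : ∀ i, 0 ≤ lamt i)
    (πt : Pol) (hfeas : ∀ i, JC i πt ≤ τ i - za)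
    (hdual : IsLUB (Set.range fun p => JR p + ∑ i, lamt i * ((τ i - za) - JC i p)) (JR πt)) :
    (∃ π' : Pol, ∀ i, JC i π' ≤ (τ i - za) - (φ / (1 - γ) - za)) ∧
      ∑ i, lamt i ≤ 1 / (φ - (1 - γ) * za) := by
  have h1γ : (0:ℝ) < 1 - γ := by linarith
  have hm : 0 < φ / (1 - γ) - za := by linarith
  constructor
  · exact ⟨πhat, fun i => by have := hslater i; linarith⟩
  · -- key: JR πt ≥ JR πhat + ∑ lamt i * ((τ i - za) - JC i πhat)
    have hub := hdual.1 ⟨πhat, rfl⟩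
    simp only at hub
    have hsum : (φ / (1 - γ) - za) * ∑ i, lamt i ≤
        ∑ i, lamt i * ((τ i - za) - JC i πhat) := by
      rw [Finset.mul_sum]
      refine Finset.sum_le_sum fun i _ => ?_
      rw [mul_comm]
      refine mul_le_mul_of_nonneg_left ?_ (hlamt i)
      have := hslater i; linarith
    have hJRt := (hJR πt).2
    have hJRh := (hJR πhat).1
    have h2 : (φ / (1 - γ) - za) * ∑ i, lamt i ≤ 1 / (1 - γ) := by
      calc (φ / (1 - γ) - za) * ∑ i, lamt i ≤ ∑ i, lamt i * ((τ i - za) - JC i πhat) := hsum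
        _ ≤ JR πt - JR πhat := by linarith [hub]
        _ ≤ 1 / (1 - γ) := by linarith
    have hkey : φ - (1 - γ) * za > 0 := by
      have := (lt_div_iff₀ h1γ).mp hza; nlinarith
    rw [le_div_iff₀ hkey]
    have : (∑ i, lamt i) * (φ - (1 - γ) * za) = (1 - γ) * ((φ / (1 - γ) - za) * ∑ i, lamt i) := by
      field_simp
    rw [this]
    calc (1 - γ) * ((φ / (1 - γ) - za) * ∑ i, lamt i) ≤ (1 - γ) * (1 / (1 - γ)) :=
          mul_le_mul_of_nonneg_left h2 h1γ.le
      _ = 1 := by field_simp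
end
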